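/- arXiv:1912.07779 — 3 statements merged into one kernel-verified Lean document; each statement's English description precedes it below -/
import Mathlib

section
/- Let m ≥ 1 and let r ≥ 2 be even. Then M(mK_r) = mr²(mr+1)²/8 − mr(mr+1)(2mr+1)/12 (an equality of rational numbers). -/
open Finset

/-- The product-sum M(f) of a vertex labeling: the sum of `f u * f v` over all edges
`{u,v}` of `G`, each edge counted exactly once. -/
noncomputable def prodSum {V : Type*} [Fintype V] (G : SimpleGraph V) (f : V → ℕ) : ℕ := by
  classical
  exact ∑ e ∈ G.edgeFinset, Sym2.lift ⟨fun u v => f u * f v, fun u v => Nat.mul_comm _ _⟩ e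

/-- A labeling of a graph on `V`: a bijection from the vertices onto `{1,…,|V|}`. -/
def IsLabeling (V : Type*) [Fintype V] (f : V → ℕ) : Prop :=
  Set.BijOn f Set.univ (Set.Icc 1 (Fintype.card V))

/-- MinPS of `G`: the minimum of `M(f)` over all labelings `f`. -/
noncomputable def minPS {V : Type*} [Fintype V] (G : SimpleGraph V) : ℕ :=
  sInf { m | ∃ f : V → ℕ, IsLabeling V f ∧ prodSum G f = m }

/-- `mK_r`: the vertex-disjoint union of `m` copies of the complete graph `K_r`.
Vertex `(i, x)` lies in the `i`-th copy; two vertices are adjacent iff they are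
distinct and lie in the same copy. -/
def mKGraph (m r : ℕ) : SimpleGraph (Fin m × Fin r) where
  Adj a b := a.1 = b.1 ∧ a.2 ≠ b.2
  symm := ⟨fun a b h => ⟨h.1.symm, h.2.symm⟩⟩
  loopless := ⟨fun a h => h.2 rfl⟩


/-!
For a labeling `f` of `mK_r` with row sums `R_i = ∑_x f(i, x)`, expanding the squares gives
`2 M(f) + ∑_{k ≤ N} k² = ∑_i R_i²` (`N = mr`), and `∑_i R_i = ∑_{k ≤ N} k` does not depend on `f`.
By Cauchy–Schwarz `m ∑_i R_i² ≥ (∑_i R_i)²`, with equality when all rows have the same sum.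
For even `r = 2s` this is achieved by pairing the labels `k` and `N + 1 - k` inside each row,
and evaluating `M` at that labeling gives the formula.
-/

namespace SimpleGraph

variable {V : Type*} [Fintype V] (G : SimpleGraph V) [DecidableRel G.Adj]

theorem sum_dart_edge {M : Type*} [AddCommMonoid M] (F : Sym2 V → M) :
    ∑ d : G.Dart, F d.edge = 2 • ∑ e ∈ G.edgeFinset, F e := by
  classical
  rw [← sum_fiberwise_of_maps_to (g := Dart.edge) (t := G.edgeFinset)
    (fun d _ => mem_edgeFinset.2 d.edge_mem), smul_sum]
  refine sum_congr rfl fun e he => ?_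
  rw [sum_congr rfl fun d hd => congrArg F (mem_filter.1 hd).2, sum_const,
    G.dart_edge_fiber_card e (mem_edgeFinset.1 he)]

theorem sum_dart_eq_sum_sum_neighborFinset {M : Type*} [AddCommMonoid M] (h : V → V → M) :
    ∑ d : G.Dart, h d.fst d.snd = ∑ u, ∑ v ∈ G.neighborFinset u, h u v := by
  let e : G.Dart ≃ {p : V × V // G.Adj p.1 p.2} :=
    ⟨fun d => ⟨d.toProd, d.adj⟩, fun p => ⟨p.1, p.2⟩, fun _ => rfl, fun _ => rfl⟩
  simp_rw [neighborFinset_eq_filter, sum_filter, ← Fintype.sum_prod_type', ← sum_filter]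
  rw [sum_subtype _ fun _ => mem_filter_univ _]
  exact Fintype.sum_equiv e (fun d => h d.fst d.snd) (fun p => h p.1.1 p.1.2) fun _ => rfl

end SimpleGraph

theorem two_mul_prodSum {V : Type*} [Fintype V] (G : SimpleGraph V) [DecidableRel G.Adj]
    (f : V → ℕ) : 2 * prodSum G f = ∑ u, f u * ∑ v ∈ G.neighborFinset u, f v := by
  classical
  simp_rw [mul_sum, ← G.sum_dart_eq_sum_sum_neighborFinset (fun u v => f u * f v)]
  rw [prodSum, ← smul_eq_mul]
  convert (G.sum_dart_edge _).symm using 3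
  · -- `prodSum` uses the classical decidability instance for `G.Adj`
    congr!
  · rfl

section Labeling

variable {V : Type*} [Fintype V]

theorem IsLabeling.sum_comp {f : V → ℕ} (hf : IsLabeling V f) {M : Type*} [AddCommMonoid M]
    (h : ℕ → M) : ∑ v, h (f v) = ∑ k ∈ Icc 1 (Fintype.card V), h k := by
  refine sum_nbij f (fun v _ => ?_) (by simpa using hf.injOn) (by simpa using hf.surjOn)
    fun _ _ => rfl
  simpa using hf.mapsTo (Set.mem_univ v)

theorem isLabeling_of_equiv {n : ℕ} (e : V ≃ Fin n) : IsLabeling V fun v => (e v : ℕ) + 1 := by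
  rw [IsLabeling, Fintype.card_congr e, Fintype.card_fin]
  refine ⟨fun v _ => ⟨Nat.le_add_left _ _, (e v).isLt⟩,
    fun v _ w _ h => e.injective (Fin.ext (Nat.add_right_cancel h)), fun k hk => ?_⟩
  obtain ⟨hk1, hkn⟩ := hk
  exact ⟨e.symm ⟨k - 1, by omega⟩, Set.mem_univ _, by simp only [Equiv.apply_symm_apply]; omega⟩

theorem minPS_eq_prodSum_of_forall_le (G : SimpleGraph V) {g : V → ℕ} (hg : IsLabeling V g)
    (h : ∀ f, IsLabeling V f → prodSum G g ≤ prodSum G f) : minPS G = prodSum G g :=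
  le_antisymm (Nat.sInf_le ⟨g, hg, rfl⟩)
    (le_csInf ⟨_, g, hg, rfl⟩ fun _ ⟨f, hf, hfg⟩ => hfg ▸ h f hf)

end Labeling

theorem sum_Icc_sq_mul_six (n : ℕ) : (∑ k ∈ Icc 1 n, k ^ 2) * 6 = n * (n + 1) * (2 * n + 1) := by
  induction n with
  | zero => simp
  | succ n ih =>
    rw [sum_Icc_succ_top (by omega), add_mul, ih]
    ring

instance (m r : ℕ) : DecidableRel (mKGraph m r).Adj :=
  fun a b => inferInstanceAs (Decidable (a.1 = b.1 ∧ a.2 ≠ b.2))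

section CliqueUnion

variable {m r : ℕ}

theorem neighborFinset_mKGraph (i : Fin m) (x : Fin r) :
    (mKGraph m r).neighborFinset (i, x) = (univ.erase x).map (Function.Embedding.sectR i _) := by
  ext ⟨j, y⟩
  rw [SimpleGraph.mem_neighborFinset]
  simp only [mKGraph, mem_map, mem_erase, Function.Embedding.sectR_apply, Prod.mk.injEq]
  aesop

theorem two_mul_prodSum_mKGraph_add_sum_sq (f : Fin m × Fin r → ℕ) :
    2 * prodSum (mKGraph m r) f + ∑ p, f p ^ 2 = ∑ i, (∑ x, f (i, x)) ^ 2 := by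
  rw [two_mul_prodSum, ← sum_add_distrib, Fintype.sum_prod_type]
  refine sum_congr rfl fun i _ => ?_
  rw [sq, sum_mul_sum]
  refine sum_congr rfl fun x _ => ?_
  rw [neighborFinset_mKGraph, sum_map, ← sum_erase_add _ _ (mem_univ x), mul_sum, sq]
  rfl

theorem sq_sum_Icc_le_mul_prodSum_mKGraph {f : Fin m × Fin r → ℕ} (hf : IsLabeling _ f) :
    (∑ k ∈ Icc 1 (m * r), k) ^ 2
      ≤ m * (2 * prodSum (mKGraph m r) f + ∑ k ∈ Icc 1 (m * r), k ^ 2) := by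
  have hsum := hf.sum_comp id
  have hsq := hf.sum_comp (· ^ 2)
  simp only [Fintype.card_prod, Fintype.card_fin, id] at hsum hsq
  rw [← hsum, ← hsq, two_mul_prodSum_mKGraph_add_sum_sq, Fintype.sum_prod_type]
  simpa using sq_sum_le_card_mul_sum_sq (s := univ) (f := fun i => ∑ x, f (i, x))

end CliqueUnion

section BalancedLabel

variable {m s : ℕ}

/-- Row `i` of `mK_{2s}` receives, in its first half, the labels `a + 1` for the `a` of the
`i`-th block of `{0, …, ms - 1}`, and in its second half their mirror images `2ms - a`;
so each row consists of `s` pairs of labels summing to `2ms + 1`. -/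
def balancedEquiv (m s : ℕ) : Fin m × Fin (s + s) ≃ Fin (m * s + m * s) :=
  (Equiv.prodCongr (Equiv.refl _) finSumFinEquiv.symm).trans <|
    (Equiv.prodSumDistrib _ _ _).trans <|
      (Equiv.sumCongr finProdFinEquiv (finProdFinEquiv.trans Fin.revPerm)).trans finSumFinEquiv

def balancedLabel (m s : ℕ) (p : Fin m × Fin (s + s)) : ℕ := balancedEquiv m s p + 1

theorem isLabeling_balancedLabel : IsLabeling _ (balancedLabel m s) :=
  isLabeling_of_equiv (balancedEquiv m s)

theorem balancedLabel_castAdd_add_natAdd (i : Fin m) (y : Fin s) :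
    balancedLabel m s (i, Fin.castAdd s y) + balancedLabel m s (i, Fin.natAdd s y)
      = 2 * (m * s) + 1 := by
  have := (finProdFinEquiv (i, y)).isLt
  simp [balancedLabel, balancedEquiv, -Fin.natAdd_eq_addNat, -finProdFinEquiv_apply_val]
  omega

theorem sum_balancedLabel_row (i : Fin m) :
    ∑ x, balancedLabel m s (i, x) = s * (2 * (m * s) + 1) := by
  rw [Fin.sum_univ_add, ← sum_add_distrib]
  simp only [balancedLabel_castAdd_add_natAdd, sum_const, card_univ, Fintype.card_fin, smul_eq_mul]

theorem two_mul_prodSum_balancedLabel_add_sum_sq :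
    2 * prodSum (mKGraph m (s + s)) (balancedLabel m s) + ∑ k ∈ Icc 1 (m * (s + s)), k ^ 2
      = m * (s * (2 * (m * s) + 1)) ^ 2 := by
  have hsq := (isLabeling_balancedLabel (m := m) (s := s)).sum_comp (· ^ 2)
  simp only [Fintype.card_prod, Fintype.card_fin] at hsq
  simp [← hsq, two_mul_prodSum_mKGraph_add_sum_sq, sum_balancedLabel_row]

theorem sum_Icc_mul_add_self : ∑ k ∈ Icc 1 (m * (s + s)), k = m * (s * (2 * (m * s) + 1)) := by
  have hsum := (isLabeling_balancedLabel (m := m) (s := s)).sum_comp id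
  simp only [Fintype.card_prod, Fintype.card_fin, id] at hsum
  simp [← hsum, Fintype.sum_prod_type, sum_balancedLabel_row]

theorem prodSum_balancedLabel_le (hm : 1 ≤ m) {f : Fin m × Fin (s + s) → ℕ}
    (hf : IsLabeling _ f) :
    prodSum (mKGraph m (s + s)) (balancedLabel m s) ≤ prodSum (mKGraph m (s + s)) f := by
  have hbound := sq_sum_Icc_le_mul_prodSum_mKGraph hf
  rw [sum_Icc_mul_add_self, mul_pow, sq m, mul_assoc,
    ← two_mul_prodSum_balancedLabel_add_sum_sq] at hbound
  have := Nat.le_of_mul_le_mul_left hbound hm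
  omega

end BalancedLabel

theorem statement4_general (m r : ℕ) (hm : 1 ≤ m) (hr2 : Even r) :
    (minPS (mKGraph m r) : ℚ) =
      (m : ℚ) * r ^ 2 * (m * r + 1) ^ 2 / 8 - m * r * (m * r + 1) * (2 * m * r + 1) / 12 := by
  obtain ⟨s, rfl⟩ := hr2
  rw [minPS_eq_prodSum_of_forall_le _ isLabeling_balancedLabel
    fun _ hf => prodSum_balancedLabel_le hm hf]
  have hP : ((2 * prodSum (mKGraph m (s + s)) (balancedLabel m s)
      + ∑ k ∈ Icc 1 (m * (s + s)), k ^ 2 : ℕ) : ℚ) = ((m * (s * (2 * (m * s) + 1)) ^ 2 : ℕ) : ℚ) :=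
    congrArg _ two_mul_prodSum_balancedLabel_add_sum_sq
  have hQ : (((∑ k ∈ Icc 1 (m * (s + s)), k ^ 2) * 6 : ℕ) : ℚ)
      = ((m * (s + s) * (m * (s + s) + 1) * (2 * (m * (s + s)) + 1) : ℕ) : ℚ) :=
    congrArg _ (sum_Icc_sq_mul_six _)
  push_cast at hP hQ ⊢
  linear_combination hP / 2 - hQ / 12

/-- For `m ≥ 1` and even `r ≥ 2`,
`M(mK_r) = mr²(mr+1)²/8 − mr(mr+1)(2mr+1)/12`. -/
theorem statement4 (m r : ℕ) (hm : 1 ≤ m) (hr : 2 ≤ r) (hr2 : Even r) :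
    (minPS (mKGraph m r) : ℚ) =
      (m : ℚ) * r ^ 2 * (m * r + 1) ^ 2 / 8 - m * r * (m * r + 1) * (2 * m * r + 1) / 12 :=
  statement4_general m r hm hr2
end

section
/- For every integer θ ≥ 3, there exists a labeling f of the cycle C_θ with M(f) = M(C_θ) such that the vertex labeled 1 and the vertex labeled θ are adjacent in C_θ. -/
open Finset

/-!
Take a labeling `f` of minimal product-sum and suppose the vertices labeled `1` and `θ` are
not adjacent. Rotate the cycle so that label `1` sits at position `0` and label `θ` at
position `K`, with `2 ≤ K ≤ θ - 2`, and reverse the block of positions `1, …, K`. This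
2-opt move replaces the edges `{a₀, a₁}, {a_K, a_{K+1}}` by `{a₀, a_K}, {a₁, a_{K+1}}` and
leaves every other edge product unchanged, so it changes the product-sum by
`-(a_K - a₁)(a_{K+1} - a₀) < 0`, because `a₀ = 1` and `a_K = θ` are the extreme labels.
This contradicts minimality.
-/

open Fin.NatCast Fin.CommRing

namespace IsLabeling

variable {V : Type*} [Fintype V] {f : V → ℕ}

lemma comp_bijective (hf : IsLabeling V f) {σ : V → V} (hσ : σ.Bijective) :
    IsLabeling V (f ∘ σ) :=
  hf.comp hσ.bijOn_univ

lemma injective (hf : IsLabeling V f) : f.Injective :=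
  Set.injOn_univ.mp hf.injOn

lemma mem_Icc (hf : IsLabeling V f) (v : V) : f v ∈ Set.Icc 1 (Fintype.card V) :=
  hf.mapsTo (Set.mem_univ v)

lemma exists_eq (hf : IsLabeling V f) {k : ℕ} (hk : k ∈ Set.Icc 1 (Fintype.card V)) :
    ∃ v, f v = k := by
  obtain ⟨v, -, hv⟩ := hf.surjOn hk
  exact ⟨v, hv⟩

lemma one_lt_of_ne (hf : IsLabeling V f) {x y : V} (hx : f x = 1) (hyx : y ≠ x) : 1 < f y :=
  lt_of_le_of_ne (hf.mem_Icc y).1 fun h => hyx (hf.injective (hx.trans h).symm)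

lemma lt_card_of_ne (hf : IsLabeling V f) {x y : V} (hx : f x = Fintype.card V) (hyx : y ≠ x) :
    f y < Fintype.card V :=
  lt_of_le_of_ne (hf.mem_Icc y).2 fun h => hyx (hf.injective (h.trans hx.symm))

end IsLabeling

lemma exists_isLabeling (V : Type*) [Fintype V] : ∃ f : V → ℕ, IsLabeling V f := by
  let e := Fintype.equivFin V
  refine ⟨fun v => e v + 1, fun v _ => ?_,
    fun v _ w _ h => e.injective (Fin.ext (by simpa using h)), fun k hk => ?_⟩
  · have := (e v).isLt
    simp only [Set.mem_Icc]
    omega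
  · obtain ⟨hk1, hkV⟩ := hk
    exact ⟨e.symm ⟨k - 1, by omega⟩, Set.mem_univ _, by simp; omega⟩

lemma exists_isLabeling_prodSum_eq_minPS {V : Type*} [Fintype V] (G : SimpleGraph V) :
    ∃ f : V → ℕ, IsLabeling V f ∧ prodSum G f = minPS G := by
  obtain ⟨f, hf⟩ := exists_isLabeling V
  exact Nat.sInf_mem (s := {m | ∃ f, IsLabeling V f ∧ prodSum G f = m}) ⟨_, f, hf, rfl⟩

lemma minPS_le_prodSum {V : Type*} [Fintype V] (G : SimpleGraph V) {f : V → ℕ}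
    (hf : IsLabeling V f) : minPS G ≤ prodSum G f :=
  Nat.sInf_le ⟨f, hf, rfl⟩

lemma cycleGraph_adj_iff {n : ℕ} [NeZero n] (hn : 2 ≤ n) {u v : Fin n} :
    (SimpleGraph.cycleGraph n).Adj u v ↔ u - v = 1 ∨ v - u = 1 := by
  obtain ⟨m, rfl⟩ : ∃ m, n = m + 2 := ⟨n - 2, by omega⟩
  exact SimpleGraph.cycleGraph_adj

lemma prodSum_cycleGraph {n : ℕ} [NeZero n] (hn : 3 ≤ n) (f : Fin n → ℕ) :
    prodSum (SimpleGraph.cycleGraph n) f = ∑ i : Fin n, f i * f (i + 1) := by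
  classical
  have hinj : Set.InjOn (fun i : Fin n => s(i, i + 1)) ↑(univ : Finset (Fin n)) := by
    intro i _ j _ hij
    rcases Sym2.eq_iff.mp hij with ⟨h, -⟩ | ⟨rfl, hj⟩
    · exact h
    · have h2 : ((2 : ℕ) : Fin n) = 0 := by
        have h : j + 2 = j + 0 := by rw [add_zero, ← one_add_one_eq_two, ← add_assoc, hj]
        exact_mod_cast add_left_cancel h
      rw [Fin.natCast_eq_zero] at h2
      exact absurd (Nat.le_of_dvd two_pos h2) (by omega)
  rw [prodSum]
  refine (sum_congr ?_ fun _ _ => rfl).trans (sum_image hinj)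
  ext e
  induction e using Sym2.ind with
  | h u v =>
    simp only [SimpleGraph.mem_edgeFinset, SimpleGraph.mem_edgeSet,
      cycleGraph_adj_iff (by omega : 2 ≤ n), mem_image, mem_univ, true_and, Sym2.eq_iff,
      sub_eq_iff_eq_add']
    constructor
    · rintro (rfl | rfl)
      exacts [⟨v, .inr ⟨rfl, rfl⟩⟩, ⟨u, .inl ⟨rfl, rfl⟩⟩]
    · rintro ⟨i, ⟨rfl, rfl⟩ | ⟨rfl, rfl⟩⟩
      exacts [.inr rfl, .inl rfl]

def flipSegment (K j : ℕ) : ℕ := if 1 ≤ j ∧ j ≤ K then K + 1 - j else j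

lemma flipSegment_involutive (K : ℕ) : (flipSegment K).Involutive := by
  intro j
  unfold flipSegment
  split_ifs <;> omega

lemma flipSegment_lt {K n j : ℕ} (hK : K < n) (hj : j < n) : flipSegment K j < n := by
  unfold flipSegment
  split_ifs <;> omega

lemma flipSegment_of_lt {K j : ℕ} (hj : K < j) : flipSegment K j = j := by
  simp [flipSegment]; omega

lemma flipSegment_zero (K : ℕ) : flipSegment K 0 = 0 := rfl

lemma sum_range_flipSegment (a : ℕ → ℕ) {K n : ℕ} (hK : 1 ≤ K) (hKn : K + 1 ≤ n) :
    ∑ j ∈ range n, a (flipSegment K j) * a (flipSegment K (j + 1)) +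
        (a 0 * a 1 + a K * a (K + 1)) =
      ∑ j ∈ range n, a j * a (j + 1) + (a 0 * a K + a 1 * a (K + 1)) := by
  induction n, hKn using Nat.le_induction with
  | base =>
    obtain ⟨m, rfl⟩ : ∃ m, K = m + 1 := ⟨K - 1, by omega⟩
    have hmid :
        ∑ j ∈ range m, a (flipSegment (m + 1) (j + 1)) * a (flipSegment (m + 1) (j + 1 + 1)) =
          ∑ j ∈ range m, a (j + 1) * a (j + 1 + 1) := by
      rw [← sum_range_reflect]
      refine sum_congr rfl fun j hj => ?_
      have hj := mem_range.mp hj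
      simp only [flipSegment]
      rw [if_pos (by omega), if_pos (by omega), mul_comm]
      congr 2 <;> omega
    rw [sum_range_succ, sum_range_succ', hmid, sum_range_succ, sum_range_succ']
    have hfirst : flipSegment (m + 1) 1 = m + 1 := by simp [flipSegment]
    have hlast : flipSegment (m + 1) (m + 1) = 1 := by simp [flipSegment]
    simp only [flipSegment_zero, flipSegment_of_lt (Nat.lt_succ_self _), zero_add,
      Nat.succ_eq_add_one, hfirst, hlast]
    ring
  | succ n hn ih =>
    rw [sum_range_succ, sum_range_succ, flipSegment_of_lt (by omega : K < n),
      flipSegment_of_lt (by omega : K < n + 1)]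
    omega

lemma sum_cycle_eq_sum_range {n : ℕ} [NeZero n] (F : Fin n → ℕ) :
    ∑ i : Fin n, F i * F (i + 1) = ∑ j ∈ range n, F j * F (j + 1 : ℕ) := by
  rw [← Fin.sum_univ_eq_sum_range (fun j => F j * F (j + 1 : ℕ))]
  simp only [Fin.cast_val_eq_self, Nat.cast_add, Nat.cast_one]

lemma sum_cycle_comp_add_right {n : ℕ} [NeZero n] (F : Fin n → ℕ) (u : Fin n) :
    ∑ i : Fin n, F (i + u) * F (i + 1 + u) = ∑ i : Fin n, F i * F (i + 1) :=
  Fintype.sum_equiv (Equiv.addRight u) _ _ fun i => by simp [add_right_comm]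

lemma exists_isLabeling_sum_cycle_lt {n K : ℕ} [NeZero n] (hK : 2 ≤ K) (hKn : K + 2 ≤ n)
    {g : Fin n → ℕ} (hg : IsLabeling (Fin n) g) (hg0 : g 0 = 1) (hgK : g K = n) :
    ∃ h : Fin n → ℕ, IsLabeling (Fin n) h ∧
      ∑ i : Fin n, h i * h (i + 1) < ∑ i : Fin n, g i * g (i + 1) := by
  let σ : Fin n → Fin n := fun i => ⟨flipSegment K i, flipSegment_lt (by omega) i.2⟩
  have hσ : σ.Involutive := fun i => Fin.ext (flipSegment_involutive K i)
  have hσ_natCast : ∀ j ≤ n, σ j = (flipSegment K j : Fin n) := by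
    intro j hj
    rcases hj.lt_or_eq with hj | rfl
    · ext
      rw [Fin.val_cast_of_lt (flipSegment_lt (by omega) hj)]
      simp [σ, Fin.val_cast_of_lt hj]
    · ext
      simp [σ, flipSegment_zero, flipSegment_of_lt (by omega : K < j)]
  refine ⟨g ∘ σ, hg.comp_bijective hσ.bijective, ?_⟩
  let a : ℕ → ℕ := fun j => g j
  have hcard : Fintype.card (Fin n) = n := Fintype.card_fin n
  have ha1 : a 1 < a K := by
    have hne : ((1 : ℕ) : Fin n) ≠ K := by
      rw [Ne, Fin.ext_iff, Fin.val_cast_of_lt (by omega), Fin.val_cast_of_lt (by omega)]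
      omega
    simpa [a, hgK, hcard] using hg.lt_card_of_ne (by rwa [hcard]) hne
  have haK1 : a 0 < a (K + 1) := by
    have hne : ((K + 1 : ℕ) : Fin n) ≠ 0 := by
      rw [Ne, Fin.ext_iff, Fin.val_cast_of_lt (by omega), Fin.val_zero]
      omega
    simpa [a, hg0] using hg.one_lt_of_ne hg0 hne
  have hreverse := sum_range_flipSegment a (by omega : 1 ≤ K) (by omega : K + 1 ≤ n)
  have hexchange := mul_add_mul_lt_mul_add_mul ha1 haK1
  rw [sum_cycle_eq_sum_range, sum_cycle_eq_sum_range,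
    sum_congr rfl fun j hj => by
      rw [Function.comp_apply, Function.comp_apply, hσ_natCast j (by simp at hj; omega),
        hσ_natCast (j + 1) (by simp at hj; omega)]]
  simp only [a] at hreverse hexchange
  linarith

lemma exists_isLabeling_prodSum_cycleGraph_lt {n : ℕ} [NeZero n] (hn : 3 ≤ n)
    {f : Fin n → ℕ} (hf : IsLabeling (Fin n) f) {u v : Fin n} (hu : f u = 1) (hv : f v = n)
    (huv : ¬(SimpleGraph.cycleGraph n).Adj u v) :
    ∃ h : Fin n → ℕ, IsLabeling (Fin n) h ∧
      prodSum (SimpleGraph.cycleGraph n) h < prodSum (SimpleGraph.cycleGraph n) f := by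
  set K := (v - u).val
  have hvu : v - u ≠ 0 := by
    rw [sub_ne_zero]
    rintro rfl
    omega
  have hK0 : K ≠ 0 := Fin.val_ne_zero_iff.mpr hvu
  have hK1 : K ≠ 1 := fun h => huv (SimpleGraph.cycleGraph_adj'.mpr (.inr h))
  have hKn : K ≠ n - 1 := fun h => huv (SimpleGraph.cycleGraph_adj'.mpr (.inl (by
    rw [← neg_sub, Fin.val_neg, if_neg hvu]
    omega)))
  have hKlt : K < n := (v - u).isLt
  obtain ⟨h, hh, hlt⟩ := exists_isLabeling_sum_cycle_lt (g := fun i => f (i + u)) (K := K)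
    (by omega) (by omega) (hf.comp_bijective (Equiv.addRight u).bijective)
    (by simpa using hu) (by simp [K, hv])
  refine ⟨h, hh, ?_⟩
  rwa [prodSum_cycleGraph hn, prodSum_cycleGraph hn, ← sum_cycle_comp_add_right f u]

/-- For every `θ ≥ 3`, there is a labeling `f` of the cycle `C_θ`
achieving `M(f) = M(C_θ)` and such that the vertex labeled `1` and the vertex labeled
`θ` are adjacent. -/
theorem statement12 (θ : ℕ) (hθ : 3 ≤ θ) :
    ∃ f : Fin θ → ℕ, IsLabeling (Fin θ) f ∧
      prodSum (SimpleGraph.cycleGraph θ) f = minPS (SimpleGraph.cycleGraph θ) ∧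
      ∃ u v : Fin θ, f u = 1 ∧ f v = θ ∧ (SimpleGraph.cycleGraph θ).Adj u v := by
  have : NeZero θ := ⟨by omega⟩
  obtain ⟨f, hf, hmin⟩ := exists_isLabeling_prodSum_eq_minPS (SimpleGraph.cycleGraph θ)
  obtain ⟨u, hu⟩ := hf.exists_eq (k := 1) (by simp; omega)
  obtain ⟨v, hv⟩ := hf.exists_eq (k := θ) (by simp; omega)
  refine ⟨f, hf, hmin, u, v, hu, hv, ?_⟩
  by_contra huv
  obtain ⟨h, hh, hlt⟩ := exists_isLabeling_prodSum_cycleGraph_lt hθ hf hu hv huv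
  exact (minPS_le_prodSum _ hh).not_gt (hmin ▸ hlt)
end

section
/- For every integer θ ≥ 3, the maximum over all bijections σ from the edge set of the cycle C_θ to {1,…,θ} of the access-minsum min_v p_v(σ) is exactly θ. -/
open Finset

/-- The popularity of vertex `v` under an edge labeling `σ`: the sum of the labels of
the edges of `G` incident to `v`. -/
noncomputable def popularity {V : Type*} [Fintype V] (G : SimpleGraph V) (σ : Sym2 V → ℕ)
    (v : V) : ℕ := by
  classical
  exact ∑ e ∈ G.edgeFinset.filter (fun e => v ∈ e), σ e

/-- An edge labeling of `G`: a bijection from the edge set of `G` onto `{1,…,θ}`,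
where `θ` is the number of edges of `G`. -/
def IsEdgeLabeling {V : Type*} (G : SimpleGraph V) (σ : Sym2 V → ℕ) : Prop :=
  Set.BijOn σ G.edgeSet (Set.Icc 1 (Nat.card G.edgeSet))

/-!
The edge labelled `1` meets two further edges, whose labels are distinct, so one of them is at
most `θ - 1` and the vertex they share with it has popularity at most `θ`. Conversely, labelling
consecutive edges `θ, 1, θ - 1, 2, θ - 2, …` makes every popularity at least `θ`, with equality
at the vertex between the edges labelled `1` and `θ - 1`.
-/

open SimpleGraph Function

lemma Function.Injective.bijOn_extend {α β γ : Type*} {f : α → β} {g : α → γ}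
    (hf : Injective f) (hg : Injective g) (j : β → γ) :
    Set.BijOn (extend f g j) (Set.range f) (Set.range g) := by
  refine ⟨?_, ?_, ?_⟩
  · rintro _ ⟨a, rfl⟩
    exact ⟨a, (hf.extend_apply g j a).symm⟩
  · rintro _ ⟨a, rfl⟩ _ ⟨b, rfl⟩ h
    rw [hf.extend_apply, hf.extend_apply] at h
    rw [hg h]
  · rintro _ ⟨a, rfl⟩
    exact ⟨f a, ⟨a, rfl⟩, hf.extend_apply g j a⟩

section Popularity

variable {V : Type*} [Fintype V] [DecidableEq V]

lemma popularity_eq_sum_neighborFinset (G : SimpleGraph V) [DecidableRel G.Adj]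
    (σ : Sym2 V → ℕ) (v : V) :
    popularity G σ v = ∑ w ∈ G.neighborFinset v, σ s(v, w) := by
  classical
  have hinc : G.edgeFinset.filter (v ∈ ·) = (G.neighborFinset v).image (s(v, ·)) := by
    ext e
    induction e using Sym2.ind with
    | _ a b =>
      simp only [Finset.mem_filter, mem_edgeFinset, mem_edgeSet, Finset.mem_image,
        mem_neighborFinset, Sym2.mem_iff]
      constructor
      · rintro ⟨hab, rfl | rfl⟩
        · exact ⟨b, hab, rfl⟩
        · exact ⟨a, hab.symm, Sym2.eq_swap⟩
      · rintro ⟨w, hw, hwe⟩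
        rcases Sym2.eq_iff.mp hwe with ⟨rfl, rfl⟩ | ⟨rfl, rfl⟩
        · exact ⟨hw, Or.inl rfl⟩
        · exact ⟨hw.symm, Or.inr rfl⟩
  rw [popularity]
  convert Finset.sum_image (f := σ) fun a _ b _ h => Sym2.congr_right.mp h using 2
  convert hinc

end Popularity

section CycleGraph

variable {n : ℕ}

def cycleEdge [NeZero n] (i : Fin n) : Sym2 (Fin n) := s(i, i + 1)

lemma cycleGraph_edgeSet : (cycleGraph (n + 2)).edgeSet = Set.range cycleEdge := by
  ext e
  induction e using Sym2.ind with
  | _ u v =>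
    simp only [mem_edgeSet, cycleGraph_adj, Set.mem_range, cycleEdge, Sym2.eq_iff,
      sub_eq_iff_eq_add']
    constructor
    · rintro (rfl | rfl)
      · exact ⟨v, Or.inr ⟨rfl, rfl⟩⟩
      · exact ⟨u, Or.inl ⟨rfl, rfl⟩⟩
    · rintro ⟨i, ⟨rfl, rfl⟩ | ⟨rfl, rfl⟩⟩
      · exact Or.inr rfl
      · exact Or.inl rfl

lemma Fin.sub_one_ne_add_one (v : Fin (n + 3)) : v - 1 ≠ v + 1 := by
  rw [Ne, sub_eq_iff_eq_add, add_assoc, left_eq_add]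
  simp [Fin.ext_iff, Fin.val_add, Nat.mod_eq_of_lt]

lemma injective_cycleEdge : Injective (cycleEdge (n := n + 3)) := by
  intro i j h
  simp only [cycleEdge, Sym2.eq_iff] at h
  rcases h with ⟨h, -⟩ | ⟨rfl, h⟩
  · exact h
  · exact absurd (by rw [add_sub_cancel_right, h]) (j + 1).sub_one_ne_add_one

lemma card_edgeSet_cycleGraph : Nat.card (cycleGraph (n + 3)).edgeSet = n + 3 := by
  rw [cycleGraph_edgeSet, Nat.card_range_of_injective injective_cycleEdge,
    Nat.card_eq_fintype_card, Fintype.card_fin]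

lemma popularity_cycleGraph (σ : Sym2 (Fin (n + 3)) → ℕ) (v : Fin (n + 3)) :
    popularity (cycleGraph (n + 3)) σ v = σ (cycleEdge (v - 1)) + σ (cycleEdge v) := by
  rw [popularity_eq_sum_neighborFinset, cycleGraph_neighborFinset,
    Finset.sum_pair v.sub_one_ne_add_one, cycleEdge, cycleEdge, sub_add_cancel,
    Sym2.eq_swap (a := v - 1)]

lemma exists_popularity_le_of_isEdgeLabeling {σ : Sym2 (Fin (n + 3)) → ℕ}
    (hσ : IsEdgeLabeling (cycleGraph (n + 3)) σ) :
    ∃ v, popularity (cycleGraph (n + 3)) σ v ≤ n + 3 := by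
  rw [IsEdgeLabeling, card_edgeSet_cycleGraph, cycleGraph_edgeSet] at hσ
  obtain ⟨_, ⟨i, rfl⟩, hi⟩ := hσ.surjOn (Set.left_mem_Icc.mpr (by omega : 1 ≤ n + 3))
  have hle (j : Fin (n + 3)) : σ (cycleEdge j) ≤ n + 3 := (hσ.mapsTo ⟨j, rfl⟩).2
  have hne : σ (cycleEdge (i - 1)) ≠ σ (cycleEdge (i + 1)) := fun h =>
    i.sub_one_ne_add_one (injective_cycleEdge (hσ.injOn ⟨_, rfl⟩ ⟨_, rfl⟩ h))
  by_cases h : σ (cycleEdge (i - 1)) ≤ n + 2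
  · exact ⟨i, by rw [popularity_cycleGraph, hi]; omega⟩
  · refine ⟨i + 1, ?_⟩
    rw [popularity_cycleGraph, add_sub_cancel_right, hi]
    have := hle (i - 1)
    have := hle (i + 1)
    omega

end CycleGraph

def zigzag (n : ℕ) (i : Fin n) : ℕ :=
  if i.val % 2 = 0 then n - i.val / 2 else (i.val + 1) / 2

lemma injective_zigzag (n : ℕ) : Injective (zigzag n) := by
  intro i j h
  have := i.is_lt
  have := j.is_lt
  simp only [zigzag] at h
  exact Fin.ext (by split_ifs at h <;> omega)

lemma range_zigzag (n : ℕ) : Set.range (zigzag n) = Set.Icc 1 n := by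
  ext k
  constructor
  · rintro ⟨i, rfl⟩
    have := i.is_lt
    simp only [zigzag, Set.mem_Icc]
    split_ifs <;> omega
  · rintro ⟨hk1, hkn⟩
    by_cases h : 2 * k ≤ n
    · exact ⟨⟨2 * k - 1, by omega⟩, by simp only [zigzag]; split_ifs <;> omega⟩
    · exact ⟨⟨2 * (n - k), by omega⟩, by simp only [zigzag]; split_ifs <;> omega⟩

lemma le_zigzag_sub_one_add_zigzag (n : ℕ) (v : Fin (n + 1)) :
    n + 1 ≤ zigzag (n + 1) (v - 1) + zigzag (n + 1) v := by
  have := v.is_lt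
  have hv := Fin.coe_sub_one v
  simp only [Fin.ext_iff, Fin.val_zero] at hv
  simp only [zigzag]
  split_ifs at hv ⊢ <;> omega

lemma zigzag_one_add_zigzag_two (n : ℕ) : zigzag (n + 3) 1 + zigzag (n + 3) (1 + 1) = n + 3 := by
  have h1 : ((1 : Fin (n + 3)) : ℕ) = 1 := Fin.val_one _
  have h2 : ((1 + 1 : Fin (n + 3)) : ℕ) = 2 := by simp [Fin.val_add, Nat.mod_eq_of_lt]
  norm_num [zigzag, h1, h2]
  omega

noncomputable def zigzagLabeling (n : ℕ) : Sym2 (Fin (n + 3)) → ℕ :=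
  extend cycleEdge (zigzag (n + 3)) 0

lemma zigzagLabeling_cycleEdge (n : ℕ) (i : Fin (n + 3)) :
    zigzagLabeling n (cycleEdge i) = zigzag (n + 3) i :=
  injective_cycleEdge.extend_apply _ _ i

lemma isEdgeLabeling_zigzagLabeling (n : ℕ) :
    IsEdgeLabeling (cycleGraph (n + 3)) (zigzagLabeling n) := by
  rw [IsEdgeLabeling, card_edgeSet_cycleGraph, cycleGraph_edgeSet, ← range_zigzag]
  exact injective_cycleEdge.bijOn_extend (injective_zigzag _) 0

lemma isLeast_popularity_zigzagLabeling (n : ℕ) :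
    IsLeast (Set.range (popularity (cycleGraph (n + 3)) (zigzagLabeling n))) (n + 3) := by
  refine ⟨⟨1 + 1, ?_⟩, ?_⟩
  · rw [popularity_cycleGraph, add_sub_cancel_right, zigzagLabeling_cycleEdge,
      zigzagLabeling_cycleEdge, zigzag_one_add_zigzag_two]
  · rintro _ ⟨v, rfl⟩
    rw [popularity_cycleGraph, zigzagLabeling_cycleEdge, zigzagLabeling_cycleEdge]
    exact le_zigzag_sub_one_add_zigzag (n + 2) v

/-- For every `θ ≥ 3`, the maximum over all edge labelings `σ` of the
cycle `C_θ` of the access-minsum `min_v p_v(σ)` is exactly `θ`. -/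
theorem statement14 (θ : ℕ) (hθ : 3 ≤ θ) :
    IsGreatest { s | ∃ σ : Sym2 (Fin θ) → ℕ, IsEdgeLabeling (SimpleGraph.cycleGraph θ) σ ∧
      sInf (Set.range (popularity (SimpleGraph.cycleGraph θ) σ)) = s } θ := by
  obtain ⟨n, rfl⟩ : ∃ n, θ = n + 3 := ⟨θ - 3, by omega⟩
  refine ⟨⟨zigzagLabeling n, isEdgeLabeling_zigzagLabeling n,
    (isLeast_popularity_zigzagLabeling n).csInf_eq⟩, ?_⟩
  rintro _ ⟨σ, hσ, rfl⟩
  obtain ⟨v, hv⟩ := exists_popularity_le_of_isEdgeLabeling hσ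
  exact (Nat.sInf_le (Set.mem_range_self v)).trans hv
end
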